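/- arXiv:2002.05580 — 2 statements merged into one kernel-verified Lean document; each statement's English description precedes it below -/
import Mathlib

section
/- A finite simple graph G with at least two vertices admits a straight-line drawing in the plane (an injective map from vertices to points in ℝ²) with spanning ratio equal to 1 — i.e., for every pair of vertices u, v there is a path in G whose total Euclidean edge length equals the Euclidean distance between the images of u and v — if and only if G contains a Hamiltonian path. -/
/-!
If every pair of vertices is joined by a walk whose drawing is a straight segment, then the first
step of such a walk from `u` to `v` lands on the segment `[ρ u, ρ v]`. Projecting the drawing onto a
generic line, so that all vertices get distinct coordinates, two vertices that are consecutive in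
this order therefore have to be adjacent, and the sorted list of vertices is a Hamiltonian path.
Conversely, placing the vertices of a Hamiltonian path at `0, 1, 2, …` on a line, the subpath
between any two of them is a straight segment.
-/

/-- The Euclidean length of a walk under a straight-line drawing `ρ`. -/
noncomputable def wlen {V : Type*} {G : SimpleGraph V} (ρ : V → EuclideanSpace ℝ (Fin 2)) :
    ∀ {u v : V}, G.Walk u v → ℝ
  | _, _, SimpleGraph.Walk.nil => 0
  | u, _, SimpleGraph.Walk.cons (v := b) _ p => dist (ρ u) (ρ b) + wlen ρ p

open Function

section

variable {V : Type*} {G : SimpleGraph V}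

section wlen

variable (ρ : V → EuclideanSpace ℝ (Fin 2))

@[simp] lemma wlen_nil {u : V} : wlen ρ (SimpleGraph.Walk.nil : G.Walk u u) = 0 := rfl

@[simp] lemma wlen_cons {u w v : V} (h : G.Adj u w) (p : G.Walk w v) :
    wlen ρ (SimpleGraph.Walk.cons h p) = dist (ρ u) (ρ w) + wlen ρ p := rfl

lemma wlen_append : ∀ {u v w : V} (p : G.Walk u v) (q : G.Walk v w),
    wlen ρ (p.append q) = wlen ρ p + wlen ρ q
  | _, _, _, .nil, q => by simp
  | _, _, _, .cons h p, q => by simp [wlen_append p q, add_assoc]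

lemma wlen_concat {u v w : V} (p : G.Walk u v) (h : G.Adj v w) :
    wlen ρ (p.concat h) = wlen ρ p + dist (ρ v) (ρ w) := by
  simp [SimpleGraph.Walk.concat_eq_append, wlen_append]

lemma wlen_reverse : ∀ {u v : V} (p : G.Walk u v), wlen ρ p.reverse = wlen ρ p
  | _, _, .nil => rfl
  | _, _, .cons h p => by
    rw [SimpleGraph.Walk.reverse_cons, wlen_append, wlen_reverse p, wlen_cons, wlen_cons, wlen_nil,
      dist_comm]
    ring

lemma dist_le_wlen : ∀ {u v : V} (p : G.Walk u v), dist (ρ u) (ρ v) ≤ wlen ρ p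
  | _, _, .nil => by simp
  | u, v, .cons (v := w) h p => by
    calc dist (ρ u) (ρ v) ≤ dist (ρ u) (ρ w) + dist (ρ w) (ρ v) := dist_triangle _ _ _
      _ ≤ _ := by simpa using dist_le_wlen p

lemma wbtw_of_wlen_cons_eq_dist {u w v : V} (h : G.Adj u w) (p : G.Walk w v)
    (hp : wlen ρ (SimpleGraph.Walk.cons h p) = dist (ρ u) (ρ v)) : Wbtw ℝ (ρ u) (ρ w) (ρ v) := by
  rw [wlen_cons] at hp
  refine dist_add_dist_eq_iff.mp (le_antisymm ?_ (dist_triangle _ _ _))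
  linarith [dist_le_wlen ρ p]

end wlen

def HasSpanningRatioOne (G : SimpleGraph V) (ρ : V → EuclideanSpace ℝ (Fin 2)) : Prop :=
  ∀ u v, ∃ p : G.Walk u v, wlen ρ p = dist (ρ u) (ρ v)

lemma dist_smul_single_zero_one (s t : ℝ) :
    dist (s • EuclideanSpace.single (0 : Fin 2) (1 : ℝ)) (t • EuclideanSpace.single 0 1) =
      |s - t| := by
  simp [dist_eq_norm, ← sub_smul, norm_smul]

lemma exists_walk_wlen_eq_sub [LinearOrder V] [SuccOrder V] [IsSuccArchimedean V]
    (hG : ∀ a b : V, a ⋖ b → G.Adj a b) {ρ : V → EuclideanSpace ℝ (Fin 2)} {x : V → ℝ}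
    (hx : Monotone x) (hρ : ∀ a b, dist (ρ a) (ρ b) = |x a - x b|) {a b : V} (hab : a ≤ b) :
    ∃ p : G.Walk a b, wlen ρ p = x b - x a := by
  induction hab using Succ.rec with
  | rfl => exact ⟨.nil, by simp⟩
  | succ b hab ih =>
    obtain ⟨p, hp⟩ := ih
    by_cases hb : IsMax b
    · rw [Order.succ_eq_iff_isMax.mpr hb]
      exact ⟨p, hp⟩
    have hcov := Order.covBy_succ_of_not_isMax hb
    refine ⟨p.concat (hG _ _ hcov), ?_⟩
    rw [wlen_concat, hp, hρ, abs_of_nonpos (sub_nonpos.mpr (hx hcov.le))]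
    ring

namespace SimpleGraph

/-- The Hasse diagram of the linear order pulled back along `f` is a subgraph of `G`. -/
def IsHamiltonianRanking (G : SimpleGraph V) (f : V → ℝ) : Prop :=
  Injective f ∧ ∀ u v, f u < f v → (∀ w, f u < f w → ¬ f w < f v) → G.Adj u v

lemma exists_isPath_support_eq_Icc [LinearOrder V] [SuccOrder V] [IsSuccArchimedean V]
    (hG : ∀ a b : V, a ⋖ b → G.Adj a b) {a b : V} (hab : a ≤ b) :
    ∃ p : G.Walk a b, p.IsPath ∧ ∀ w, w ∈ p.support ↔ w ∈ Set.Icc a b := by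
  induction hab using Succ.rec with
  | rfl => exact ⟨.nil, .nil, by simp [le_antisymm_iff, and_comm]⟩
  | succ b hab ih =>
    obtain ⟨p, hp, hsupp⟩ := ih
    by_cases hb : IsMax b
    · rw [Order.succ_eq_iff_isMax.mpr hb]
      exact ⟨p, hp, hsupp⟩
    have hcov := Order.covBy_succ_of_not_isMax hb
    refine ⟨p.concat (hG _ _ hcov), hp.concat (fun h => ?_) _, fun w => ?_⟩
    · exact hcov.lt.not_ge ((hsupp _).mp h).2
    · simp only [Walk.support_concat, List.mem_append, List.mem_singleton, hsupp, Set.mem_Icc,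
        Order.le_succ_iff_eq_or_le]
      have := hab.trans hcov.le
      grind

namespace IsHamiltonianRanking

variable [Fintype V] {f : V → ℝ}

lemma exists_isHamiltonian [DecidableEq V] [Nonempty V] (hf : G.IsHamiltonianRanking f) :
    ∃ (u v : V) (p : G.Walk u v), p.IsHamiltonian := by
  let _ := LinearOrder.lift' f hf.1
  let _ := Fintype.toLocallyFiniteOrder (α := V)
  let _ := LinearLocallyFiniteOrder.succOrder V
  have hne := Finset.univ_nonempty (α := V)
  obtain ⟨p, hp, hsupp⟩ := exists_isPath_support_eq_Icc (G := G) (fun u v h => hf.2 u v h.1 h.2)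
    (Finset.univ.min'_le _ (Finset.mem_univ (Finset.univ.max' hne)))
  exact ⟨_, _, p, hp.isHamiltonian_of_mem fun w => (hsupp w).mpr
    ⟨Finset.univ.min'_le w (Finset.mem_univ w), Finset.univ.le_max' w (Finset.mem_univ w)⟩⟩

lemma exists_injective_hasSpanningRatioOne (hf : G.IsHamiltonianRanking f) :
    ∃ ρ : V → EuclideanSpace ℝ (Fin 2), Injective ρ ∧ HasSpanningRatioOne G ρ := by
  set ρ : V → EuclideanSpace ℝ (Fin 2) := fun v => f v • EuclideanSpace.single 0 1
  have hρ a b := dist_smul_single_zero_one (f a) (f b)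
  refine ⟨ρ, fun a b hab => hf.1 ?_, fun u v => ?_⟩
  · simpa [ρ, hab, sub_eq_zero, eq_comm] using hρ a b
  let _ := LinearOrder.lift' f hf.1
  let _ := Fintype.toLocallyFiniteOrder (α := V)
  let _ := LinearLocallyFiniteOrder.succOrder V
  have hG : ∀ a b : V, a ⋖ b → G.Adj a b := fun a b h => hf.2 a b h.1 h.2
  rcases le_total u v with huv | hvu
  · obtain ⟨p, hp⟩ := exists_walk_wlen_eq_sub hG (fun _ _ h => h) hρ huv
    refine ⟨p, ?_⟩
    rw [hp, hρ, abs_sub_comm, abs_of_nonneg (sub_nonneg.mpr (show f u ≤ f v from huv))]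
  · obtain ⟨p, hp⟩ := exists_walk_wlen_eq_sub hG (fun _ _ h => h) hρ hvu
    refine ⟨p.reverse, ?_⟩
    rw [wlen_reverse, hp, hρ, abs_of_nonneg (sub_nonneg.mpr (show f v ≤ f u from hvu))]

end IsHamiltonianRanking

lemma Walk.IsHamiltonian.isHamiltonianRanking [DecidableEq V] {a b : V} {p : G.Walk a b}
    (hp : p.IsHamiltonian) : G.IsHamiltonianRanking (fun v => (hp.getVertEquiv.symm v : ℝ)) := by
  set e := hp.getVertEquiv
  refine ⟨Nat.cast_injective.comp (Fin.val_injective.comp e.symm.injective), fun u v huv hbtw => ?_⟩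
  obtain ⟨i, rfl⟩ := e.surjective u
  obtain ⟨j, rfl⟩ := e.surjective v
  simp only [Equiv.symm_apply_apply, Nat.cast_lt] at huv hbtw
  have hi : i.val + 1 < p.support.length := by omega
  have hj : j.val = i + 1 := by
    by_contra hne
    refine hbtw (e ⟨i + 1, hi⟩) ?_ ?_ <;> simp only [Equiv.symm_apply_apply] <;> omega
  have hadj := p.adj_getVert_succ (i := i) (by simpa using hi)
  simpa [e, hj] using hadj

end SimpleGraph

lemma Module.Dual.exists_injective_comp {ι K M : Type*} [Finite ι] [Field K] [Infinite K]
    [AddCommGroup M] [Module K M] {ρ : ι → M} (hρ : Function.Injective ρ) :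
    ∃ ℓ : Module.Dual K M, Function.Injective (ℓ ∘ ρ) := by
  obtain ⟨ℓ, hℓ⟩ := Module.exists_dual_forall_apply_ne_zero (K := K)
    (fun i : {q : ι × ι // q.1 ≠ q.2} => ρ i.1.1 - ρ i.1.2) (fun i => sub_ne_zero.mpr (hρ.ne i.2))
  refine ⟨ℓ, fun a b hab => by_contra fun hne => hℓ ⟨(a, b), hne⟩ ?_⟩
  simpa [sub_eq_zero] using hab

lemma HasSpanningRatioOne.isHamiltonianRanking {ρ : V → EuclideanSpace ℝ (Fin 2)}
    (hρ : HasSpanningRatioOne G ρ) {ℓ : Module.Dual ℝ (EuclideanSpace ℝ (Fin 2))}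
    (hℓ : Injective (ℓ ∘ ρ)) : G.IsHamiltonianRanking (ℓ ∘ ρ) := by
  refine ⟨hℓ, fun u v huv hbtw => ?_⟩
  obtain ⟨p, hp⟩ := hρ u v
  cases p with
  | nil => exact absurd huv (lt_irrefl _)
  | @cons _ w _ h q =>
    by_cases hwv : w = v
    · exact hwv ▸ h
    have hw : ℓ (ρ u) ≤ ℓ (ρ w) ∧ ℓ (ρ w) ≤ ℓ (ρ v) :=
      (wbtw_iff_of_le huv.le).mp ((wbtw_of_wlen_cons_eq_dist ρ h q hp).map ℓ.toAffineMap)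
    have hℓu : ℓ (ρ u) ≠ ℓ (ρ w) := hℓ.ne (G.ne_of_adj h)
    have hℓv : ℓ (ρ w) ≠ ℓ (ρ v) := hℓ.ne hwv
    exact absurd (lt_of_le_of_ne hw.2 hℓv) (hbtw w (lt_of_le_of_ne hw.1 hℓu))

end

/-- A graph with at least two vertices admits a straight-line drawing with spanning ratio 1
iff it contains a Hamiltonian path. -/
theorem drawing_spanning_ratio_one_iff_hamiltonianPath
    {V : Type*} [Fintype V] [DecidableEq V] (G : SimpleGraph V)
    (hn : 2 ≤ Fintype.card V) :
    (∃ ρ : V → EuclideanSpace ℝ (Fin 2), Function.Injective ρ ∧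
      ∀ u v : V, ∃ p : G.Walk u v, wlen ρ p = dist (ρ u) (ρ v)) ↔
    (∃ (u v : V) (p : G.Walk u v), p.IsHamiltonian) := by
  constructor
  · rintro ⟨ρ, hρ, hratio⟩
    have : Nonempty V := Fintype.card_pos_iff.mp (by omega)
    obtain ⟨ℓ, hℓ⟩ := Module.Dual.exists_injective_comp (K := ℝ) hρ
    exact (HasSpanningRatioOne.isHamiltonianRanking hratio hℓ).exists_isHamiltonian
  · rintro ⟨u, v, p, hp⟩
    exact hp.isHamiltonianRanking.exists_injective_hasSpanningRatioOne
end

section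
/- Let w : ℕ → ℝ≥0 satisfy w(1) = 0 and suppose for each n ≥ 2 there is a finite family of positive integers {n_{j,i}} with each n_{j,i} ≤ n/2 and Σ n_{j,i} ≤ n − 1, such that w(n) ≤ C · Σ_{j,i} w(n_{j,i}) + C·(n−1)·log₂ n, where C ≥ 1 is a constant. Then w(n) ≤ C^{log₂ n} · n² · log₂ n for all n ≥ 1. -/
/-!
Strong induction on `n`. Every child size `m` satisfies `m ≤ n / 2`, so `log₂ m ≤ log₂ n - 1`
and the induction hypothesis bounds each `w m` by `C ^ (log₂ n - 1) · log₂ n · m²`; the extra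
factor `C` of the recurrence restores `C ^ log₂ n`. Since the children are positive integers
with total at most `n - 1`, their squares sum to at most `(n - 1)²`, and
`(n - 1)² + (n - 1) ≤ n²` absorbs the additive term.
-/

open Real

namespace Multiset

lemma sum_map_sq_le_sq_sum_map_of_nonneg {ι R : Type*} [CommSemiring R] [PartialOrder R]
    [IsOrderedRing R] {s : Multiset ι} {f : ι → R} (hf : ∀ i ∈ s, 0 ≤ f i) :
    (s.map fun i ↦ f i ^ 2).sum ≤ (s.map f).sum ^ 2 := by
  have hle : ∀ i ∈ s, f i ^ 2 ≤ f i * (s.map f).sum := fun i hi ↦ by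
    rw [sq]
    gcongr
    · exact hf i hi
    · exact single_le_sum (fun x hx ↦ by
        obtain ⟨j, hj, rfl⟩ := mem_map.mp hx
        exact hf j hj) _ (mem_map_of_mem f hi)
  calc (s.map fun i ↦ f i ^ 2).sum ≤ (s.map fun i ↦ f i * (s.map f).sum).sum :=
        sum_map_le_sum_map _ _ hle
    _ = (s.map f).sum ^ 2 := by rw [sum_map_mul_right, sq]

end Multiset

lemma logb_two_le_logb_two_sub_one {m n : ℝ} (hm : 0 < m) (hmn : m ≤ n / 2) :
    logb 2 m ≤ logb 2 n - 1 := by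
  have hn : 0 < n := by linarith
  calc logb 2 m ≤ logb 2 (n / 2) := logb_le_logb_of_le one_lt_two hm hmn
    _ = logb 2 n - 1 := by rw [logb_div hn.ne' two_ne_zero, logb_self_eq_one one_lt_two]

lemma rpow_logb_mul_sq_mul_logb_le {C m n : ℝ} (hC : 1 ≤ C) (hm : 1 ≤ m) (hmn : m ≤ n / 2) :
    C ^ logb 2 m * m ^ 2 * logb 2 m ≤ C ^ (logb 2 n - 1) * logb 2 n * m ^ 2 := by
  have hlog := logb_two_le_logb_two_sub_one (by linarith) hmn
  calc C ^ logb 2 m * m ^ 2 * logb 2 m = C ^ logb 2 m * logb 2 m * m ^ 2 := by ring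
    _ ≤ C ^ (logb 2 n - 1) * logb 2 n * m ^ 2 :=
        mul_le_mul_of_nonneg_right (mul_le_mul (rpow_le_rpow_of_exponent_le hC hlog)
          (by linarith) (logb_nonneg one_lt_two hm) (by positivity)) (sq_nonneg m)

lemma sum_map_le_mul_sq_of_le_mul_sq {s : Multiset ℕ} {w : ℕ → ℝ} {K x : ℝ} (hK : 0 ≤ K)
    (hw : ∀ m ∈ s, w m ≤ K * (m : ℝ) ^ 2) (hs : (s.sum : ℝ) ≤ x) :
    (s.map w).sum ≤ K * x ^ 2 := by
  have hsq : (s.map fun m : ℕ ↦ (m : ℝ) ^ 2).sum ≤ x ^ 2 := by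
    refine (Multiset.sum_map_sq_le_sq_sum_map_of_nonneg fun m _ ↦ Nat.cast_nonneg m).trans ?_
    rw [← Nat.cast_multiset_sum]
    gcongr
  calc (s.map w).sum ≤ (s.map fun m : ℕ ↦ K * (m : ℝ) ^ 2).sum :=
        Multiset.sum_map_le_sum_map _ _ hw
    _ ≤ K * x ^ 2 := by
        rw [Multiset.sum_map_mul_left]
        gcongr

lemma recurrence_step_le {C K L x : ℝ} (hC : 0 ≤ C) (hK : 1 ≤ K) (hL : 0 ≤ L) (hx : 1 ≤ x) :
    C * (K * L * (x - 1) ^ 2) + C * (x - 1) * L ≤ C * K * x ^ 2 * L := by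
  have hCL : 0 ≤ C * L := mul_nonneg hC hL
  have hx1 : 0 ≤ x - 1 := by linarith
  nlinarith [mul_nonneg (mul_nonneg hCL hx1) (sub_nonneg.mpr hK),
    mul_nonneg hCL (by linarith : (0 : ℝ) ≤ x)]

theorem width_recurrence_bound_general
    (w : ℕ → ℝ) (h1 : w 1 = 0)
    (C : ℝ) (hC : 1 ≤ C)
    (hrec : ∀ n : ℕ, 2 ≤ n → ∃ s : Multiset ℕ,
      (∀ m ∈ s, 0 < m ∧ (m : ℝ) ≤ (n : ℝ) / 2) ∧
      ((s.sum : ℝ) ≤ (n : ℝ) - 1) ∧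
      w n ≤ C * (s.map w).sum + C * ((n : ℝ) - 1) * Real.logb 2 n) :
    ∀ n : ℕ, 1 ≤ n → w n ≤ C ^ (Real.logb 2 n) * (n : ℝ) ^ 2 * Real.logb 2 n := by
  intro n
  induction n using Nat.strong_induction_on with
  | _ n ih =>
  intro hn
  rcases hn.eq_or_lt with rfl | hn2
  · simp [h1]
  obtain ⟨s, hmem, hsum, hw⟩ := hrec n hn2
  set L := logb 2 (n : ℝ)
  have hL : 1 ≤ L := by
    simpa using logb_le_logb_of_le one_lt_two two_pos (show (2 : ℝ) ≤ n by exact_mod_cast hn2)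
  have hchild : ∀ m ∈ s, w m ≤ C ^ (L - 1) * L * (m : ℝ) ^ 2 := fun m hm ↦ by
    obtain ⟨hm0, hmn⟩ := hmem m hm
    have hmlt : m < n := by exact_mod_cast (show (m : ℝ) < n by linarith)
    exact (ih m hmlt hm0).trans
      (rpow_logb_mul_sq_mul_logb_le hC (by exact_mod_cast hm0) hmn)
  calc w n ≤ C * (s.map w).sum + C * ((n : ℝ) - 1) * L := hw
    _ ≤ C * (C ^ (L - 1) * L * ((n : ℝ) - 1) ^ 2) + C * ((n : ℝ) - 1) * L := by
        gcongr
        exact sum_map_le_mul_sq_of_le_mul_sq (by positivity) hchild hsum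
    _ ≤ C * C ^ (L - 1) * (n : ℝ) ^ 2 * L :=
        recurrence_step_le (by linarith) (one_le_rpow hC (by linarith)) (by linarith)
          (by exact_mod_cast hn)
    _ = C ^ L * (n : ℝ) ^ 2 * L := by
        rw [← rpow_one_add' (by linarith) (by linarith), add_sub_cancel]

/-- If `w 1 = 0`, `w` is nonnegative, and for each `n ≥ 2` there is a family of positive
integers `n_{j,i} ≤ n/2` with `Σ n_{j,i} ≤ n - 1` and
`w n ≤ C·Σ w(n_{j,i}) + C·(n-1)·log₂ n` for a constant `C ≥ 1`, then
`w n ≤ C^(log₂ n) · n² · log₂ n` for all `n ≥ 1`. -/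
theorem width_recurrence_bound
    (w : ℕ → ℝ) (hpos : ∀ n, 0 ≤ w n) (h1 : w 1 = 0)
    (C : ℝ) (hC : 1 ≤ C)
    (hrec : ∀ n : ℕ, 2 ≤ n → ∃ s : Multiset ℕ,
      (∀ m ∈ s, 0 < m ∧ (m : ℝ) ≤ (n : ℝ) / 2) ∧
      ((s.sum : ℝ) ≤ (n : ℝ) - 1) ∧
      w n ≤ C * (s.map w).sum + C * ((n : ℝ) - 1) * Real.logb 2 n) :
    ∀ n : ℕ, 1 ≤ n → w n ≤ C ^ (Real.logb 2 n) * (n : ℝ) ^ 2 * Real.logb 2 n :=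
  width_recurrence_bound_general w h1 C hC hrec
end
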